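/- arXiv:2403.07295 — 6 statements merged into one kernel-verified Lean document; each statement's English description precedes it below -/
import Mathlib

section
/- Let d ≥ 1 be an integer and let Z be a nonzero d×d real symmetric positive semidefinite matrix. Then for every η > 0 there exists a constant C > 0 such that for every d×d real symmetric positive semidefinite matrix R with ‖R‖_F ≤ η one has (det R)^{1/d} ≤ C · (tr(R·Z))^{rank(Z)/d}. -/
/-!
Diagonalise `Z = U diag(λ) Uᵀ` and pass to `M = Uᵀ R U`: it is positive semidefinite, has the
determinant and Frobenius norm of `R`, and `tr (R Z) = ∑ Mᵢᵢ λᵢ`. Every diagonal entry of `M`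
is at most `‖R‖_F ≤ η`, and for the `rank Z` indices with `λᵢ > 0` also `Mᵢᵢ λᵢ ≤ tr (R Z)`.
Together with the crude Hadamard bound `det M ≤ d! ∏ Mᵢᵢ` (from `Mᵢⱼ² ≤ Mᵢᵢ Mⱼⱼ`) this gives
`det R ≤ K · tr (R Z) ^ rank Z`, and the theorem follows by taking `d`-th roots.
-/

open Matrix Finset

lemma prod_mul_prod_ne_zero_le_pow_mul_sum_pow {n : Type*} [Fintype n] {x e : n → ℝ} {η : ℝ}
    (hx : ∀ i, 0 ≤ x i) (he : ∀ i, 0 ≤ e i) (hxη : ∀ i, x i ≤ η) :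
    (∏ i, x i) * ∏ i with e i ≠ 0, e i ≤
      η ^ #{i | e i = 0} * (∑ i, x i * e i) ^ #{i | e i ≠ 0} := by
  have hxe_nonneg : ∀ i, 0 ≤ x i * e i := fun i => mul_nonneg (hx i) (he i)
  calc (∏ i, x i) * ∏ i with e i ≠ 0, e i
      = (∏ i with e i = 0, x i) * ∏ i with e i ≠ 0, x i * e i := by
        rw [← prod_filter_mul_prod_filter_not univ (fun i => e i = 0), prod_mul_distrib]
        ring
    _ ≤ η ^ #{i | e i = 0} * (∑ i, x i * e i) ^ #{i | e i ≠ 0} := by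
        rw [← prod_const, ← prod_const]
        refine mul_le_mul (prod_le_prod (fun i _ => hx i) fun i _ => hxη i)
          (prod_le_prod (fun i _ => hxe_nonneg i) fun i _ => ?_)
          (prod_nonneg fun i _ => hxe_nonneg i) (prod_nonneg fun i _ => (hx i).trans (hxη i))
        exact single_le_sum (fun j _ => hxe_nonneg j) (mem_univ i)

namespace Matrix

variable {n : Type*}

lemma PosSemidef.sq_apply_le_mul {M : Matrix n n ℝ} (hM : M.PosSemidef) (i j : n) :
    M i j ^ 2 ≤ M i i * M j j := by
  have h := (hM.submatrix ![i, j]).det_nonneg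
  rw [det_fin_two] at h
  have hji : M j i = M i j := by simpa using hM.isHermitian.apply i j
  simp only [submatrix_apply, Matrix.cons_val_zero, Matrix.cons_val_one, hji] at h
  linarith

section

variable [Fintype n]

lemma IsHermitian.sq_apply_le_trace_mul_self {M : Matrix n n ℝ} (hM : M.IsHermitian) (i j : n) :
    M i j ^ 2 ≤ (M * M).trace := by
  have hMM : (M * M).PosSemidef := by
    simpa only [hM.eq] using posSemidef_conjTranspose_mul_self M
  calc M i j ^ 2 ≤ ∑ k, M i k ^ 2 := single_le_sum (fun k _ => sq_nonneg (M i k)) (mem_univ j)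
    _ = (M * M) i i := by
        simp only [mul_apply, sq]
        refine sum_congr rfl fun k _ => ?_
        rw [show M k i = M i k by simpa using (hM.apply k i).symm]
    _ ≤ (M * M).trace :=
      single_le_sum (f := fun k => (M * M) k k) (fun k _ => hMM.diag_nonneg) (mem_univ i)

lemma PosSemidef.abs_prod_apply_perm_le {M : Matrix n n ℝ} (hM : M.PosSemidef)
    (σ : Equiv.Perm n) : |∏ i, M (σ i) i| ≤ ∏ i, M i i := by
  have hdiag : ∀ i, 0 ≤ M i i := fun i => hM.diag_nonneg
  calc |∏ i, M (σ i) i|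
      ≤ ∏ i, (√(M (σ i) (σ i)) * √(M i i)) := by
        rw [abs_prod]
        refine prod_le_prod (fun i _ => abs_nonneg _) fun i _ => ?_
        rw [← Real.sqrt_mul (hdiag _)]
        exact Real.abs_le_sqrt (hM.sq_apply_le_mul _ _)
    _ = ∏ i, (√(M i i) * √(M i i)) := by
        rw [prod_mul_distrib, prod_mul_distrib, Equiv.prod_comp σ fun i => √(M i i)]
    _ = ∏ i, M i i := prod_congr rfl fun i _ => Real.mul_self_sqrt (hdiag i)

variable [DecidableEq n]

lemma PosSemidef.det_le_factorial_mul_prod_diag {M : Matrix n n ℝ} (hM : M.PosSemidef) :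
    M.det ≤ (Fintype.card n).factorial * ∏ i, M i i := by
  calc M.det ≤ ∑ σ : Equiv.Perm n, |Equiv.Perm.sign σ • ∏ i, M (σ i) i| :=
        (le_abs_self _).trans (det_apply M ▸ abs_sum_le_sum_abs _ _)
    _ ≤ ∑ _σ : Equiv.Perm n, ∏ i, M i i := by
        refine sum_le_sum fun σ _ => ?_
        rcases Int.units_eq_one_or (Equiv.Perm.sign σ) with h | h <;>
          simpa [h] using hM.abs_prod_apply_perm_le σ
    _ = (Fintype.card n).factorial * ∏ i, M i i := by
        rw [sum_const, card_univ, Fintype.card_perm, nsmul_eq_mul]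

lemma det_conjStarAlgAut (U : unitary (Matrix n n ℝ)) (A : Matrix n n ℝ) :
    (Unitary.conjStarAlgAut ℝ _ U A).det = A.det := by
  rw [Unitary.conjStarAlgAut_apply, det_mul, det_mul, mul_right_comm, ← det_mul,
    ← Unitary.coe_star, Unitary.coe_mul_star_self, det_one, one_mul]

lemma trace_conjStarAlgAut (U : unitary (Matrix n n ℝ)) (A : Matrix n n ℝ) :
    (Unitary.conjStarAlgAut ℝ _ U A).trace = A.trace := by
  rw [Unitary.conjStarAlgAut_apply, trace_mul_cycle, Unitary.coe_star_mul_self, one_mul]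

lemma IsHermitian.trace_mul_eq_sum_diag_mul_eigenvalues {Z : Matrix n n ℝ} (hZ : Z.IsHermitian)
    (R : Matrix n n ℝ) :
    (R * Z).trace =
      ∑ i, Unitary.conjStarAlgAut ℝ _ (star hZ.eigenvectorUnitary) R i i *
        hZ.eigenvalues i := by
  rw [← trace_conjStarAlgAut (star hZ.eigenvectorUnitary), map_mul,
    hZ.conjStarAlgAut_star_eigenvectorUnitary]
  simp [trace, mul_diagonal]

lemma PosSemidef.conjStarAlgAut {A : Matrix n n ℝ} (hA : A.PosSemidef)
    (U : unitary (Matrix n n ℝ)) :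
    (Unitary.conjStarAlgAut ℝ _ U A).PosSemidef := by
  simpa only [Unitary.conjStarAlgAut_apply, star_eq_conjTranspose, conjTranspose_conjTranspose]
    using hA.conjTranspose_mul_mul_same (star U : Matrix n n ℝ)

lemma PosSemidef.trace_mul_nonneg {R Z : Matrix n n ℝ} (hR : R.PosSemidef) (hZ : Z.PosSemidef) :
    0 ≤ (R * Z).trace := by
  rw [hZ.isHermitian.trace_mul_eq_sum_diag_mul_eigenvalues]
  exact sum_nonneg fun i _ =>
    mul_nonneg (hR.conjStarAlgAut _).diag_nonneg (hZ.eigenvalues_nonneg i)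

lemma PosSemidef.exists_det_le_mul_trace_mul_pow {Z : Matrix n n ℝ} (hZ : Z.PosSemidef) {η : ℝ}
    (hη : 0 < η) :
    ∃ K > 0, ∀ R : Matrix n n ℝ, R.PosSemidef → √((R * R).trace) ≤ η →
      R.det ≤ K * (R * Z).trace ^ Z.rank := by
  set ev := hZ.isHermitian.eigenvalues
  have hev : ∀ i, 0 ≤ ev i := hZ.eigenvalues_nonneg
  have hprod : 0 < ∏ i with ev i ≠ 0, ev i :=
    prod_pos fun i hi => (hev i).lt_of_ne' (mem_filter.mp hi).2
  have hrank : Z.rank = #{i | ev i ≠ 0} := by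
    rw [hZ.isHermitian.rank_eq_card_non_zero_eigs, Fintype.card_subtype]
  refine ⟨(Fintype.card n).factorial * η ^ #{i | ev i = 0} / ∏ i with ev i ≠ 0, ev i,
    by positivity, fun R hR hRη => ?_⟩
  set M := Unitary.conjStarAlgAut ℝ _ (star hZ.isHermitian.eigenvectorUnitary) R
  have hM : M.PosSemidef := hR.conjStarAlgAut _
  have hMη : ∀ i, M i i ≤ η := fun i =>
    calc M i i ≤ √((M * M).trace) :=
          (le_abs_self _).trans (Real.abs_le_sqrt (hM.isHermitian.sq_apply_le_trace_mul_self i i))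
      _ ≤ η := by rwa [← map_mul, trace_conjStarAlgAut]
  rw [div_mul_eq_mul_div, le_div_iff₀ hprod, hrank,
    hZ.isHermitian.trace_mul_eq_sum_diag_mul_eigenvalues, ← det_conjStarAlgAut _ R]
  calc M.det * ∏ i with ev i ≠ 0, ev i
      ≤ (Fintype.card n).factorial * ((∏ i, M i i) * ∏ i with ev i ≠ 0, ev i) := by
        rw [← mul_assoc]
        exact mul_le_mul_of_nonneg_right hM.det_le_factorial_mul_prod_diag hprod.le
    _ ≤ (Fintype.card n).factorial *
          (η ^ #{i | ev i = 0} * (∑ i, M i i * ev i) ^ #{i | ev i ≠ 0}) := by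
        gcongr ?_ * ?_
        exact prod_mul_prod_ne_zero_le_pow_mul_sum_pow (fun i => hM.diag_nonneg) hev hMη
    _ = _ := by ring

end

end Matrix

theorem stmt_0_general (d : ℕ) (Z : Matrix (Fin d) (Fin d) ℝ)
    (hZ : Z.PosSemidef) :
    ∀ η : ℝ, 0 < η → ∃ C : ℝ, 0 < C ∧ ∀ R : Matrix (Fin d) (Fin d) ℝ,
      R.PosSemidef → Real.sqrt ((R * R).trace) ≤ η →
      R.det ^ ((1 : ℝ) / d) ≤ C * ((R * Z).trace) ^ ((Z.rank : ℝ) / d) := by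
  intro η hη
  obtain ⟨K, hK, hdet⟩ := hZ.exists_det_le_mul_trace_mul_pow hη
  refine ⟨K ^ ((1 : ℝ) / d), by positivity, fun R hR hRη => ?_⟩
  have htrace : 0 ≤ (R * Z).trace := hR.trace_mul_nonneg hZ
  calc R.det ^ ((1 : ℝ) / d) ≤ (K * (R * Z).trace ^ Z.rank) ^ ((1 : ℝ) / d) :=
        Real.rpow_le_rpow hR.det_nonneg (hdet R hR hRη) (by positivity)
    _ = K ^ ((1 : ℝ) / d) * (R * Z).trace ^ ((Z.rank : ℝ) / d) := by
        rw [Real.mul_rpow hK.le (by positivity), ← Real.rpow_natCast, ← Real.rpow_mul htrace,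
          mul_one_div]

/-- Lemma 2.1: for nonzero PSD `Z`, on every Frobenius ball of radius `η` there is `C > 0` with
`(det R)^(1/d) ≤ C * (tr (R*Z))^(rank Z / d)` for all PSD `R` in the ball. -/
theorem stmt_0 (d : ℕ) (hd : 1 ≤ d) (Z : Matrix (Fin d) (Fin d) ℝ)
    (hZ : Z.PosSemidef) (hZ0 : Z ≠ 0) :
    ∀ η : ℝ, 0 < η → ∃ C : ℝ, 0 < C ∧ ∀ R : Matrix (Fin d) (Fin d) ℝ,
      R.PosSemidef → Real.sqrt ((R * R).trace) ≤ η →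
      R.det ^ ((1 : ℝ) / d) ≤ C * ((R * Z).trace) ^ ((Z.rank : ℝ) / d) :=
  stmt_0_general d Z hZ
end

section
/- Let d ≥ 1 be an integer, let Z be a nonzero d×d real symmetric positive semidefinite matrix, and let η > 0. Set α := 1/2 if rank(Z) < d and α := 1 if rank(Z) = d. Then there exists C_P > 0 such that for every d×d real symmetric positive semidefinite matrix Y with ‖Y‖_F ≤ η, the distance (in Frobenius norm) from Y to the set {X : X is d×d real symmetric positive semidefinite and tr(X·Z) = 0} is at most C_P · (tr(Y·Z))^α. -/
/-!
Let `Q` be the orthogonal projection onto the range of `Z` and `c > 0` the smallest nonzero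
eigenvalue of `Z`, so that `Z ≥ c Q` and `tr (Y Z) ≥ c tr (Y Q)` for `Y ⪰ 0`. Compressing `Y`
to `X = (1 - Q) Y (1 - Q)` gives a feasible point with
`‖Y - X‖² = 2 tr (Y² Q) - ‖Q Y Q‖² ≤ 2 ‖Y‖ tr (Y Q) ≤ (2 η / c) tr (Y Z)`,
which is the square-root bound. If `Z` has full rank then `Q = 1`, and `X = 0` gives
`‖Y‖ ≤ tr Y ≤ tr (Y Z) / c`.
-/

open Matrix

lemma Set.Finite.exists_pos_le_of_pos {s : Set ℝ} (hs : s.Finite) :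
    ∃ c : ℝ, 0 < c ∧ ∀ x ∈ s, 0 < x → c ≤ x := by
  rcases isEmpty_or_nonempty {x // x ∈ s ∧ 0 < x} with h | h
  · exact ⟨1, one_pos, fun x hx hx0 => (h.false ⟨x, hx, hx0⟩).elim⟩
  · have : Finite {x // x ∈ s ∧ 0 < x} := (hs.subset fun _ hx => hx.1).to_subtype
    obtain ⟨m, hm⟩ := Finite.exists_min (fun x : {x // x ∈ s ∧ 0 < x} => (x : ℝ))
    exact ⟨m, m.2.2, fun x hx hx0 => hm ⟨x, hx, hx0⟩⟩

lemma IsIdempotentElem.sub_conj_mul_self {R : Type*} [Ring R] {q : R} (hq : IsIdempotentElem q)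
    (y : R) :
    (y - (1 - q) * y * (1 - q)) * (y - (1 - q) * y * (1 - q))
      = q * y * y * q + y * q * y - q * y * q * (q * y * q) := by
  -- `noncomm_ring` cannot use `q * q = q`, so the defect `q * q - q` is carried along explicitly.
  have key : (y - (1 - q) * y * (1 - q)) * (y - (1 - q) * y * (1 - q))
      = q * y * y * q + y * q * y - q * y * q * (q * y * q)
        + q * y * (q * q - q) * y * q + (1 - q) * y * (q * q - q) * y * (1 - q) := by
    noncomm_ring
  rw [key, hq.eq, sub_self]
  simp only [mul_zero, zero_mul, add_zero]

namespace Matrix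

variable {n : Type*} [Fintype n]

lemma PosSemidef.diag_le_trace {M : Matrix n n ℝ} (hM : M.PosSemidef) (i : n) :
    M i i ≤ M.trace :=
  Finset.single_le_sum (f := fun j => M j j) (fun _ _ => hM.diag_nonneg) (Finset.mem_univ i)

lemma PosSemidef.mul_mul_same_of_isHermitian {A P : Matrix n n ℝ} (hA : A.PosSemidef)
    (hP : P.IsHermitian) :
    (P * A * P).PosSemidef := by
  have := hA.mul_mul_conjTranspose_same P
  rwa [hP.eq] at this

lemma IsHermitian.apply_le_sqrt_trace_mul_self {M : Matrix n n ℝ} (hM : M.IsHermitian) (i : n) :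
    M i i ≤ √((M * M).trace) := by
  have hsq : M i i ^ 2 ≤ (M * M) i i := by
    have hsym : ∀ j, M j i = M i j := fun j => by simpa using congrFun (congrFun hM i) j
    rw [mul_apply, Finset.sum_congr rfl fun j _ => by rw [hsym j]]
    exact (sq (M i i)).symm ▸ Finset.single_le_sum (f := fun j => M i j * M i j)
      (fun j _ => mul_self_nonneg _) (Finset.mem_univ i)
  have hpsd : (M * M).PosSemidef := by
    have := posSemidef_conjTranspose_mul_self M
    rwa [hM.eq] at this
  exact Real.le_sqrt_of_sq_le (hsq.trans (hpsd.diag_le_trace i))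

lemma sInf_le_sqrt_trace {X Y Z : Matrix n n ℝ} (hX : X.PosSemidef)
    (hXZ : (X * Z).trace = 0) :
    sInf {r : ℝ | ∃ X : Matrix n n ℝ,
        X.PosSemidef ∧ (X * Z).trace = 0 ∧ r = √(((Y - X) * (Y - X)).trace)}
      ≤ √(((Y - X) * (Y - X)).trace) :=
  csInf_le ⟨0, by rintro r ⟨X, -, -, rfl⟩; exact Real.sqrt_nonneg _⟩ ⟨X, hX, hXZ, rfl⟩

variable [DecidableEq n]

lemma IsHermitian.trace_mul_eq_sum {B : Matrix n n ℝ} (hB : B.IsHermitian) (A : Matrix n n ℝ) :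
    (A * B).trace = ∑ i, hB.eigenvalues i *
      ((hB.eigenvectorUnitary : Matrix n n ℝ)ᴴ * A * hB.eigenvectorUnitary) i i := by
  set U : Matrix n n ℝ := ↑hB.eigenvectorUnitary
  have hB' : B = U * diagonal hB.eigenvalues * Uᴴ := by
    simpa [RCLike.ofReal_real_eq_id, Unitary.conjStarAlgAut_apply, star_eq_conjTranspose]
      using hB.spectral_theorem
  conv_lhs => rw [hB']
  rw [← Matrix.mul_assoc, trace_mul_cycle, ← Matrix.mul_assoc, trace_mul_comm, trace]
  simp only [diag_apply, diagonal_mul]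

lemma PosSemidef.trace_mul_nonneg_s2 {A B : Matrix n n ℝ} (hA : A.PosSemidef) (hB : B.PosSemidef) :
    0 ≤ (A * B).trace := by
  rw [hB.isHermitian.trace_mul_eq_sum]
  exact Finset.sum_nonneg fun i _ =>
    mul_nonneg (hB.eigenvalues_nonneg i) (hA.conjTranspose_mul_mul_same _).diag_nonneg

lemma IsHermitian.trace_mul_le {A B : Matrix n n ℝ} (hA : A.IsHermitian) (hB : B.PosSemidef) :
    (A * B).trace ≤ √((A * A).trace) * B.trace := by
  set U : Matrix n n ℝ := ↑hB.isHermitian.eigenvectorUnitary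
  have hUU : U * Uᴴ = 1 := by
    simpa [star_eq_conjTranspose] using
      Unitary.mul_star_self_of_mem hB.isHermitian.eigenvectorUnitary.2
  have hM : (Uᴴ * A * U).IsHermitian := isHermitian_conjTranspose_mul_mul U hA
  have hMM : (Uᴴ * A * U * (Uᴴ * A * U)).trace = (A * A).trace := by
    rw [show Uᴴ * A * U * (Uᴴ * A * U) = Uᴴ * (A * (U * Uᴴ) * A * U) by noncomm_ring, hUU,
      Matrix.mul_one, trace_mul_comm, Matrix.mul_assoc, hUU, Matrix.mul_one]
  rw [hB.isHermitian.trace_mul_eq_sum, hB.isHermitian.trace_eq_sum_eigenvalues, Finset.mul_sum]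
  refine Finset.sum_le_sum fun i _ => ?_
  rw [mul_comm, ← hMM]
  exact mul_le_mul_of_nonneg_right (hM.apply_le_sqrt_trace_mul_self i)
    (hB.eigenvalues_nonneg i)

lemma PosSemidef.sqrt_trace_mul_self_le_trace {Y : Matrix n n ℝ} (hY : Y.PosSemidef) :
    √((Y * Y).trace) ≤ Y.trace := by
  have hle := hY.isHermitian.trace_mul_le hY
  have hsq := Real.sq_sqrt (hY.trace_mul_nonneg_s2 hY)
  nlinarith [Real.sqrt_nonneg (Y * Y).trace, hY.trace_nonneg]

open scoped MatrixOrder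

lemma PosSemidef.trace_mul_self_mul_le {Y Q : Matrix n n ℝ} (hY : Y.PosSemidef)
    (hQ : Q.PosSemidef) :
    (Y * Y * Q).trace ≤ √((Y * Y).trace) * (Y * Q).trace := by
  set W := CFC.sqrt Y
  have hW : W * W = Y := CFC.sqrt_mul_sqrt_self Y hY.nonneg
  have hWQW : (W * Q * W).PosSemidef :=
    hQ.mul_mul_same_of_isHermitian (CFC.sqrt_nonneg Y).posSemidef.isHermitian
  have hcycle : (Y * Y * Q).trace = (Y * (W * Q * W)).trace := by
    rw [← hW, show W * W * (W * W) * Q = W * (W * W * W * Q) by noncomm_ring, trace_mul_comm,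
      show W * W * W * Q * W = W * W * (W * Q * W) by noncomm_ring]
  have htrace : (W * Q * W).trace = (Y * Q).trace := by
    rw [trace_mul_comm, ← Matrix.mul_assoc, hW]
  rw [hcycle, ← htrace]
  exact hY.isHermitian.trace_mul_le hWQW

lemma PosSemidef.trace_sub_conj_mul_self_le {Y Q : Matrix n n ℝ} (hY : Y.PosSemidef)
    (hQ : Q.PosSemidef) (hQQ : IsIdempotentElem Q) :
    ((Y - (1 - Q) * Y * (1 - Q)) * (Y - (1 - Q) * Y * (1 - Q))).trace
      ≤ 2 * √((Y * Y).trace) * (Y * Q).trace := by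
  have hQYY : (Q * Y * Y * Q).trace = (Y * Y * Q).trace := by
    rw [show Q * Y * Y * Q = Q * (Y * Y * Q) by noncomm_ring, trace_mul_comm, Matrix.mul_assoc,
      hQQ.eq]
  have hYQY : (Y * Q * Y).trace = (Y * Y * Q).trace := by
    rw [trace_mul_comm, Matrix.mul_assoc]
  have hQYQ : (Q * Y * Q).PosSemidef := hY.mul_mul_same_of_isHermitian hQ.isHermitian
  rw [hQQ.sub_conj_mul_self, trace_sub, trace_add, hQYY, hYQY]
  nlinarith [hQYQ.trace_mul_nonneg_s2 hQYQ, hY.trace_mul_self_mul_le hQ]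

noncomputable def supportProj (A : Matrix n n ℝ) : Matrix n n ℝ :=
  cfc (fun x : ℝ => if x = 0 then 0 else 1) A

lemma continuousOn_spectrum (A : Matrix n n ℝ) (f : ℝ → ℝ) :
    ContinuousOn f (spectrum ℝ A) :=
  A.finite_real_spectrum.continuousOn f

lemma posSemidef_supportProj (A : Matrix n n ℝ) : (supportProj A).PosSemidef := by
  rw [← nonneg_iff_posSemidef]
  exact cfc_nonneg fun x _ => by split_ifs <;> norm_num

lemma isIdempotentElem_supportProj (A : Matrix n n ℝ) : IsIdempotentElem (supportProj A) := by
  rw [IsIdempotentElem, supportProj,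
    ← cfc_mul _ _ _ (continuousOn_spectrum A _) (continuousOn_spectrum A _)]
  exact cfc_congr fun x _ => by split_ifs <;> norm_num

lemma supportProj_mul {A : Matrix n n ℝ} (hA : A.IsHermitian) : supportProj A * A = A := by
  nth_rw 2 [← cfc_id' ℝ A hA.isSelfAdjoint]
  rw [supportProj, ← cfc_mul _ _ _ (continuousOn_spectrum A _) (continuousOn_spectrum A _)]
  conv_rhs => rw [← cfc_id' ℝ A hA.isSelfAdjoint]
  exact cfc_congr fun x _ => by split_ifs with h <;> simp [h]

lemma supportProj_eq_one {A : Matrix n n ℝ} (hA : A.IsHermitian)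
    (h : A.rank = Fintype.card n) : supportProj A = 1 := by
  have h0 : (0 : ℝ) ∉ spectrum ℝ A := by
    rw [hA.spectrum_real_eq_range_eigenvalues]
    rintro ⟨i, hi⟩
    have := Fintype.card_subtype_lt (p := fun i => hA.eigenvalues i ≠ 0) (x := i)
      (by simpa using hi)
    rw [← hA.rank_eq_card_non_zero_eigs] at this
    omega
  rw [supportProj, ← cfc_one ℝ A]
  exact cfc_congr fun x hx => by rw [if_neg (ne_of_mem_of_not_mem hx h0)]; rfl

lemma PosSemidef.exists_pos_smul_supportProj_le {A : Matrix n n ℝ} (hA : A.PosSemidef) :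
    ∃ c : ℝ, 0 < c ∧ (A - c • supportProj A).PosSemidef := by
  obtain ⟨c, hc, hle⟩ := A.finite_real_spectrum.exists_pos_le_of_pos
  refine ⟨c, hc, ?_⟩
  rw [← nonneg_iff_posSemidef, supportProj, ← cfc_smul _ _ _ (continuousOn_spectrum A _)]
  conv_rhs => arg 1; rw [← cfc_id' ℝ A hA.isHermitian.isSelfAdjoint]
  rw [← cfc_sub _ _ _ (continuousOn_spectrum A _) (continuousOn_spectrum A _)]
  refine cfc_nonneg fun x hx => ?_
  have hx0 : 0 ≤ x := spectrum_nonneg_of_nonneg hA.nonneg hx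
  split_ifs with h
  · simpa using hx0
  · simpa using hle x hx (lt_of_le_of_ne hx0 (Ne.symm h))

end Matrix

theorem stmt_2_general (d : ℕ) (Z : Matrix (Fin d) (Fin d) ℝ)
    (hZ : Z.PosSemidef) (η : ℝ) (hη : 0 < η) :
    ∃ C : ℝ, 0 < C ∧ ∀ Y : Matrix (Fin d) (Fin d) ℝ,
      Y.PosSemidef → Real.sqrt ((Y * Y).trace) ≤ η →
      sInf {r : ℝ | ∃ X : Matrix (Fin d) (Fin d) ℝ,
          X.PosSemidef ∧ (X * Z).trace = 0 ∧ r = Real.sqrt (((Y - X) * (Y - X)).trace)}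
        ≤ C * ((Y * Z).trace) ^ (if Z.rank < d then (1 : ℝ) / 2 else 1) := by
  set Q := supportProj Z
  have hQ : Q.PosSemidef := posSemidef_supportProj Z
  have hQZ : Q * Z = Z := supportProj_mul hZ.isHermitian
  obtain ⟨c, hc, hZc⟩ := hZ.exists_pos_smul_supportProj_le
  have hYQ : ∀ Y : Matrix (Fin d) (Fin d) ℝ, Y.PosSemidef →
      c * (Y * Q).trace ≤ (Y * Z).trace := by
    intro Y hY
    have := hY.trace_mul_nonneg_s2 hZc
    rwa [Matrix.mul_sub, trace_sub, Matrix.mul_smul, trace_smul, smul_eq_mul, sub_nonneg] at this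
  split_ifs with hrank
  · refine ⟨√(2 * η / c), by positivity, fun Y hY hYη => ?_⟩
    have hX : ((1 - Q) * Y * (1 - Q)).PosSemidef :=
      hY.mul_mul_same_of_isHermitian (isHermitian_one.sub hQ.1)
    have hXZ : ((1 - Q) * Y * (1 - Q) * Z).trace = 0 := by
      rw [show (1 - Q) * Y * (1 - Q) * Z = (1 - Q) * Y * (Z - Q * Z) by noncomm_ring, hQZ,
        sub_self, Matrix.mul_zero, trace_zero]
    have hdist := hY.trace_sub_conj_mul_self_le hQ (isIdempotentElem_supportProj Z)
    have hYQ0 : 0 ≤ c * (Y * Q).trace := mul_nonneg hc.le (hY.trace_mul_nonneg_s2 hQ)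
    calc _ ≤ √(((Y - (1 - Q) * Y * (1 - Q)) * (Y - (1 - Q) * Y * (1 - Q))).trace) :=
          sInf_le_sqrt_trace hX hXZ
      _ ≤ √(2 * η / c * (Y * Z).trace) := by
          refine Real.sqrt_le_sqrt (hdist.trans ?_)
          rw [div_mul_eq_mul_div, le_div_iff₀ hc]
          nlinarith [mul_le_mul_of_nonneg_right hYη hYQ0,
            mul_le_mul_of_nonneg_left (hYQ Y hY) hη.le]
      _ = √(2 * η / c) * (Y * Z).trace ^ ((1 : ℝ) / 2) := by
          rw [Real.sqrt_mul (by positivity), Real.sqrt_eq_rpow ((Y * Z).trace)]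
  · have hfull : Z.rank = Fintype.card (Fin d) := by
      rw [Fintype.card_fin]
      exact le_antisymm ((rank_le_card_width Z).trans_eq (Fintype.card_fin d)) (not_lt.mp hrank)
    have hQ1 : Q = 1 := supportProj_eq_one hZ.isHermitian hfull
    refine ⟨1 / c, by positivity, fun Y hY _ => ?_⟩
    calc _ ≤ √(((Y - 0) * (Y - 0)).trace) := sInf_le_sqrt_trace PosSemidef.zero (by simp)
      _ ≤ Y.trace := by simpa using hY.sqrt_trace_mul_self_le_trace
      _ ≤ 1 / c * (Y * Z).trace := by
          rw [one_div_mul_eq_div, le_div_iff₀ hc]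
          simpa [hQ1, mul_comm] using hYQ Y hY
      _ = 1 / c * (Y * Z).trace ^ (1 : ℝ) := by rw [Real.rpow_one]

/-- Proposition 2.1 (error bound for the PSD cone): for nonzero PSD `Z` and `η > 0` there is
`C_P > 0` such that every PSD `Y` with `‖Y‖_F ≤ η` satisfies
`dist(Y, S₊ᵈ ∩ {Z}^⊥) ≤ C_P * (tr (Y*Z))^α` where `α = 1/2` if `rank Z < d` and `α = 1`
otherwise. -/
theorem stmt_2 (d : ℕ) (hd : 1 ≤ d) (Z : Matrix (Fin d) (Fin d) ℝ)
    (hZ : Z.PosSemidef) (hZ0 : Z ≠ 0) (η : ℝ) (hη : 0 < η) :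
    ∃ C : ℝ, 0 < C ∧ ∀ Y : Matrix (Fin d) (Fin d) ℝ,
      Y.PosSemidef → Real.sqrt ((Y * Y).trace) ≤ η →
      sInf {r : ℝ | ∃ X : Matrix (Fin d) (Fin d) ℝ,
          X.PosSemidef ∧ (X * Z).trace = 0 ∧ r = Real.sqrt (((Y - X) * (Y - X)).trace)}
        ≤ C * ((Y * Z).trace) ^ (if Z.rank < d then (1 : ℝ) / 2 else 1) :=
  stmt_2_general d Z hZ η hη
end

section
/- Let d ≥ 2 be an integer, let n_x < 0 be real, let n_Z be a d×d real symmetric positive definite matrix, and set n := (n_x, n_x·(log(det(−n_Z/n_x)) + d), n_Z) ∈ E. Then K_logdet ∩ {q ∈ E : ⟨q, n⟩ = 0} = {y · f_r : y ≥ 0}, where f_r := (log(det(−n_x · n_Z^{-1})), 1, −n_x · n_Z^{-1}). -/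
/-!
For `W := -(n_x⁻¹) • n_Z ≻ 0` the hyperplane condition `⟨(x, y, Z), n⟩ = 0` reads
`tr (Z W) = x + y (log det W + d)`. On the part of the cone with `y > 0`, put `M := Z / y`; then
`x ≤ y log det M`, while the trace–log-det inequality `log det M + log det W + d ≤ tr (M W)`
(which is `∑ (λᵢ - 1 - log λᵢ) ≥ 0` over the eigenvalues `λᵢ` of the congruent matrix
`B M Bᴴ`, `W = Bᴴ B`) forces equality everywhere, hence all `λᵢ = 1`, i.e. `M = W⁻¹`, and
`x = y log det W⁻¹`. On the part with `y = 0` the condition reads `tr (Z W) = x ≤ 0`, while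
`tr (Z W) ≥ 0` for `Z ⪰ 0`, so `x = 0`, and `tr (Z W) = 0` with `W ≻ 0` forces `Z = 0`.
-/

open Matrix Filter

noncomputable section

/-- The space `E = ℝ × ℝ × S^d` (matrix parts are required to be symmetric where relevant). -/
abbrev E (d : ℕ) : Type := ℝ × ℝ × Matrix (Fin d) (Fin d) ℝ

/-- The inner product `⟨(x,y,Z),(x',y',Z')⟩ = x x' + y y' + tr (Z Z')` on `E`. -/
def ip {d : ℕ} (p q : E d) : ℝ := p.1 * q.1 + p.2.1 * q.2.1 + (p.2.2 * q.2.2).trace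

/-- The induced norm `‖(x,y,Z)‖ = sqrt (x² + y² + tr (Z²))` on `E`. -/
def nrm {d : ℕ} (p : E d) : ℝ := Real.sqrt (p.1 ^ 2 + p.2.1 ^ 2 + (p.2.2 * p.2.2).trace)

/-- Distance from a point to a set: `dist(p, S) = inf {‖p - s‖ : s ∈ S}`. -/
def sdist {d : ℕ} (p : E d) (S : Set (E d)) : ℝ := sInf {r : ℝ | ∃ s ∈ S, r = nrm (p - s)}

/-- The log-determinant cone `K_logdet`. -/
def Klogdet (d : ℕ) : Set (E d) :=
  {p | (0 < p.2.1 ∧ p.2.2.PosDef ∧ p.1 ≤ p.2.1 * Real.log ((p.2.1⁻¹ • p.2.2).det))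
    ∨ (p.1 ≤ 0 ∧ p.2.1 = 0 ∧ p.2.2.PosSemidef)}

namespace Matrix

variable {n : Type*} [Fintype n] [DecidableEq n]

section RCLike

open scoped MatrixOrder ComplexOrder

variable {𝕜 : Type*} [RCLike 𝕜] {Z W : Matrix n n 𝕜}

theorem IsHermitian.eq_one_of_eigenvalues_eq_one (hW : W.IsHermitian)
    (h : ∀ i, hW.eigenvalues i = 1) : W = 1 := by
  rw [hW.spectral_theorem, show hW.eigenvalues = 1 from funext h]
  simp

theorem PosDef.exists_isUnit_eq_star_mul_self (hW : W.PosDef) : ∃ B, IsUnit B ∧ W = star B * B :=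
  CStarAlgebra.isStrictlyPositive_iff_eq_star_mul_self.mp hW.isStrictlyPositive

theorem PosSemidef.trace_mul_nonneg_s3 (hZ : Z.PosSemidef) (hW : W.PosSemidef) :
    0 ≤ (Z * W).trace := by
  obtain ⟨B, rfl⟩ := CStarAlgebra.nonneg_iff_eq_star_mul_self.mp hW.nonneg
  rw [← Matrix.mul_assoc, trace_mul_comm, ← Matrix.mul_assoc]
  exact (hZ.mul_mul_conjTranspose_same B).trace_nonneg

theorem PosSemidef.eq_zero_of_trace_mul_eq_zero (hZ : Z.PosSemidef) (hW : W.PosDef)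
    (h : (Z * W).trace = 0) : Z = 0 := by
  obtain ⟨B, hB, rfl⟩ := hW.exists_isUnit_eq_star_mul_self
  rw [← Matrix.mul_assoc, trace_mul_comm, ← Matrix.mul_assoc] at h
  have := (hZ.mul_mul_conjTranspose_same B).trace_eq_zero_iff.mp h
  rwa [← star_eq_conjTranspose, hB.star.mul_left_eq_zero, hB.mul_right_eq_zero] at this

end RCLike

omit [DecidableEq n] in
theorem trace_mul_mul_star {R : Type*} [CommSemiring R] [StarRing R] (B M : Matrix n n R) :
    (B * M * star B).trace = (M * (star B * B)).trace := by
  rw [trace_mul_comm, ← Matrix.mul_assoc, trace_mul_comm]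

theorem log_det_inv (W : Matrix n n ℝ) : Real.log W⁻¹.det = -Real.log W.det := by
  rw [det_nonsing_inv, Ring.inverse_eq_inv', Real.log_inv]

theorem log_det_mul_mul_star {B M : Matrix n n ℝ} (hB : IsUnit B) (hM : 0 < M.det) :
    Real.log (B * M * star B).det = Real.log M.det + Real.log (star B * B).det := by
  have hdet : (B * M * star B).det = M.det * (star B * B).det := by
    simp only [det_mul, star_eq_conjTranspose, det_conjTranspose]
    ring
  rw [hdet, Real.log_mul hM.ne' ((isUnit_iff_isUnit_det _).mp (hB.star.mul hB)).ne_zero]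

namespace PosDef

variable {A M W : Matrix n n ℝ}

theorem trace_sub_log_det_sub_card (hA : A.PosDef) :
    A.trace - Real.log A.det - Fintype.card n =
      ∑ i, (hA.1.eigenvalues i - 1 - Real.log (hA.1.eigenvalues i)) := by
  simp only [hA.1.trace_eq_sum_eigenvalues, hA.1.det_eq_prod_eigenvalues, RCLike.ofReal_real_eq_id,
    id, Real.log_prod fun i _ => (hA.eigenvalues_pos i).ne', Finset.sum_sub_distrib,
    Finset.sum_const, Finset.card_univ, nsmul_eq_mul, mul_one]
  ring

theorem log_det_add_card_le_trace (hA : A.PosDef) :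
    Real.log A.det + Fintype.card n ≤ A.trace := by
  have := hA.trace_sub_log_det_sub_card ▸ Finset.sum_nonneg fun i _ =>
    sub_nonneg.2 (Real.log_le_sub_one_of_pos (hA.eigenvalues_pos i))
  linarith

theorem eq_one_of_trace_le_log_det_add_card (hA : A.PosDef)
    (h : A.trace ≤ Real.log A.det + Fintype.card n) : A = 1 := by
  refine hA.1.eq_one_of_eigenvalues_eq_one fun i => ?_
  have hgap : ∀ i, 0 ≤ hA.1.eigenvalues i - 1 - Real.log (hA.1.eigenvalues i) := fun i =>
    sub_nonneg.2 (Real.log_le_sub_one_of_pos (hA.eigenvalues_pos i))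
  have hsum : ∑ i, (hA.1.eigenvalues i - 1 - Real.log (hA.1.eigenvalues i)) = 0 :=
    le_antisymm (hA.trace_sub_log_det_sub_card ▸ by linarith) (Finset.sum_nonneg fun i _ => hgap i)
  have hi := (Finset.sum_eq_zero_iff_of_nonneg fun i _ => hgap i).1 hsum i (Finset.mem_univ i)
  by_contra hne
  linarith [Real.log_lt_sub_one_of_pos (hA.eigenvalues_pos i) hne]

theorem log_det_add_log_det_add_card_le_trace_mul (hM : M.PosDef) (hW : W.PosDef) :
    Real.log M.det + Real.log W.det + Fintype.card n ≤ (M * W).trace := by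
  obtain ⟨B, hB, rfl⟩ := hW.exists_isUnit_eq_star_mul_self
  have := ((IsUnit.posDef_star_right_conjugate_iff hB).2 hM).log_det_add_card_le_trace
  rwa [trace_mul_mul_star, log_det_mul_mul_star hB hM.det_pos] at this

theorem eq_inv_of_trace_mul_le (hM : M.PosDef) (hW : W.PosDef)
    (h : (M * W).trace ≤ Real.log M.det + Real.log W.det + Fintype.card n) : M = W⁻¹ := by
  obtain ⟨B, hB, rfl⟩ := hW.exists_isUnit_eq_star_mul_self
  have hconj : B * (M * star B) = 1 := by
    rw [← Matrix.mul_assoc]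
    refine ((IsUnit.posDef_star_right_conjugate_iff hB).2 hM).eq_one_of_trace_le_log_det_add_card ?_
    rwa [trace_mul_mul_star, log_det_mul_mul_star hB hM.det_pos]
  refine (inv_eq_left_inv ?_).symm
  rw [← Matrix.mul_assoc]
  exact mul_eq_one_comm.mp hconj

end PosDef

end Matrix

theorem ip_eq_zero_iff_trace_mul_eq {d : ℕ} {nx : ℝ} (hnx : nx ≠ 0) (L : ℝ)
    (nZ : Matrix (Fin d) (Fin d) ℝ) (q : E d) :
    ip q (nx, nx * (L + d), nZ) = 0 ↔ (q.2.2 * ((-(nx⁻¹)) • nZ)).trace = q.1 + q.2.1 * (L + d) := by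
  rw [ip, mul_smul_comm, trace_smul, smul_eq_mul]
  constructor <;> intro h <;> field_simp at h ⊢ <;> linarith

theorem smul_mem_Klogdet {d : ℕ} {t : ℝ} (ht : 0 ≤ t) {W : Matrix (Fin d) (Fin d) ℝ}
    (hW : W.PosDef) : t • ((Real.log W⁻¹.det, 1, W⁻¹) : E d) ∈ Klogdet d := by
  rcases ht.eq_or_lt with rfl | ht
  · exact Or.inr ⟨by simp, by simp, by simpa using PosSemidef.zero⟩
  · refine Or.inl ⟨by simpa, hW.inv.smul ht, ?_⟩
    simp [smul_smul, ht.ne']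

theorem eq_inv_of_trace_mul_eq_of_le_log_det {n : Type*} [Fintype n] [DecidableEq n]
    {x y : ℝ} {Z W : Matrix n n ℝ} (hW : W.PosDef) (hy : 0 < y) (hZ : Z.PosDef)
    (hx : x ≤ y * Real.log (y⁻¹ • Z).det)
    (h : (Z * W).trace = x + y * (Real.log W.det + Fintype.card n)) :
    x = y * Real.log W⁻¹.det ∧ Z = y • W⁻¹ := by
  set M := y⁻¹ • Z
  have hM : M.PosDef := hZ.smul (inv_pos.2 hy)
  have hZM : Z = y • M := by simp [M, smul_smul, hy.ne']
  have htr : (Z * W).trace = y * (M * W).trace := by rw [hZM, smul_mul, trace_smul, smul_eq_mul]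
  have hlow := mul_le_mul_of_nonneg_left (hM.log_det_add_log_det_add_card_le_trace_mul hW) hy.le
  have hMW : M = W⁻¹ := hM.eq_inv_of_trace_mul_le hW <| le_of_mul_le_mul_left (by linarith) hy
  refine ⟨?_, by rw [hZM, hMW]⟩
  rw [← hMW]
  linarith

theorem stmt_3_general (d : ℕ) (nx : ℝ) (hnx : nx < 0)
    (nZ : Matrix (Fin d) (Fin d) ℝ) (hnZ : nZ.PosDef) :
    Klogdet d ∩
        {q : E d | ip q (nx, nx * (Real.log (((-(nx⁻¹)) • nZ).det) + d), nZ) = 0}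
      = {p : E d | ∃ y : ℝ, 0 ≤ y ∧
          p = y • ((Real.log (((-nx) • nZ⁻¹).det), 1, (-nx) • nZ⁻¹) : E d)} := by
  set W := (-(nx⁻¹)) • nZ with hWdef
  have hW : W.PosDef := hnZ.smul (by simpa using hnx)
  have hWinv : (-nx) • nZ⁻¹ = W⁻¹ := (inv_eq_left_inv (by
    rw [hWdef, smul_mul_smul_comm, neg_mul_neg, mul_inv_cancel₀ hnx.ne,
      nonsing_inv_mul _ hnZ.det_pos.ne'.isUnit, one_smul])).symm
  rw [hWinv]
  ext ⟨x, y, Z⟩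
  simp only [Set.mem_inter_iff, Set.mem_ofPred_eq, ip_eq_zero_iff_trace_mul_eq hnx.ne, ← hWdef,
    Klogdet]
  constructor
  · rintro ⟨⟨hy, hZ, hx⟩ | ⟨hx, rfl, hZ⟩, hface⟩
    · obtain ⟨rfl, rfl⟩ := eq_inv_of_trace_mul_eq_of_le_log_det hW hy hZ hx
        (by rwa [Fintype.card_fin])
      exact ⟨y, hy.le, by simp⟩
    · rw [zero_mul, add_zero] at hface
      obtain rfl : x = 0 := le_antisymm hx (hface ▸ hZ.trace_mul_nonneg_s3 hW.posSemidef)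
      exact ⟨0, le_rfl, by simp [hZ.eq_zero_of_trace_mul_eq_zero hW hface]⟩
  · rintro ⟨t, ht, h⟩
    simp only [Prod.smul_mk, Prod.mk.injEq] at h
    obtain ⟨rfl, rfl, rfl⟩ := h
    refine ⟨smul_mem_Klogdet ht hW, ?_⟩
    rw [smul_mul, nonsing_inv_mul _ hW.det_pos.ne'.isUnit, trace_smul, trace_one, log_det_inv]
    simp only [Fintype.card_fin, smul_eq_mul]
    ring

/-- Proposition 3.1(a): the face of `K_logdet` exposed by
`n = (n_x, n_x (log det (-n_Z/n_x) + d), n_Z)` with `n_x < 0`, `n_Z ≻ 0` is the ray through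
`f_r = (log det (-n_x n_Z⁻¹), 1, -n_x n_Z⁻¹)`. -/
theorem stmt_3 (d : ℕ) (hd : 2 ≤ d) (nx : ℝ) (hnx : nx < 0)
    (nZ : Matrix (Fin d) (Fin d) ℝ) (hnZ : nZ.PosDef) :
    Klogdet d ∩
        {q : E d | ip q (nx, nx * (Real.log (((-(nx⁻¹)) • nZ).det) + d), nZ) = 0}
      = {p : E d | ∃ y : ℝ, 0 ≤ y ∧
          p = y • ((Real.log (((-nx) • nZ⁻¹).det), 1, (-nx) • nZ⁻¹) : E d)} :=
  stmt_3_general d nx hnx nZ hnZ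
end
end

section
/- Let d ≥ 2 be an integer, let n_y ≥ 0 be real, and let n_Z be a d×d real symmetric positive semidefinite matrix with 0 < rank(n_Z) < d; set n := (0, n_y, n_Z) ∈ E. Then K_logdet ∩ {q ∈ E : ⟨q, n⟩ = 0} = {(x, 0, Z) ∈ E : x ≤ 0, Z is positive semidefinite, and tr(Z·n_Z) = 0}. -/
open Matrix Filter

noncomputable section

/-!
A point of `K_logdet` with `y > 0` has `Z ≻ 0`, and `tr (Z n_Z) > 0` for `Z ≻ 0` and
`0 ≠ n_Z ⪰ 0` (write `n_Z = Bᴴ B`, so `tr (Z n_Z) = tr (B Z Bᴴ)` with `B Z Bᴴ ⪰ 0` nonzero).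
Hence `⟨q, n⟩ = y n_y + tr (Z n_Z) > 0` there, and on the boundary part `y = 0` the condition
`⟨q, n⟩ = 0` reduces to `tr (Z n_Z) = 0`.
-/

namespace Matrix

open scoped ComplexOrder MatrixOrder

variable {n 𝕜 : Type*} [Fintype n] [RCLike 𝕜]

theorem PosDef.trace_mul_mul_conjTranspose_eq_zero_iff {Z : Matrix n n 𝕜} (hZ : Z.PosDef)
    {m : Type*} [Fintype m] (B : Matrix m n 𝕜) : (B * Z * Bᴴ).trace = 0 ↔ B = 0 := by
  classical
  refine ⟨fun h => ?_, fun h => by simp [h]⟩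
  obtain ⟨C, hC, rfl⟩ :=
    CStarAlgebra.isStrictlyPositive_iff_eq_star_mul_self.mp hZ.isStrictlyPositive
  have hCB : (C * Bᴴ)ᴴ * (C * Bᴴ) = B * (star C * C) * Bᴴ := by
    simp only [conjTranspose_mul, conjTranspose_conjTranspose, star_eq_conjTranspose,
      Matrix.mul_assoc]
  rw [← hCB, trace_conjTranspose_mul_self_eq_zero_iff] at h
  have hB : Bᴴ = 0 := by
    simpa [← Matrix.mul_assoc, nonsing_inv_mul C ((isUnit_iff_isUnit_det C).mp hC)] using
      congrArg (C⁻¹ * ·) h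
  exact conjTranspose_eq_zero.mp hB

theorem PosDef.trace_mul_pos_of_posSemidef {Z N : Matrix n n 𝕜} (hZ : Z.PosDef)
    (hN : N.PosSemidef) (hN0 : N ≠ 0) : 0 < (Z * N).trace := by
  classical
  obtain ⟨B, rfl⟩ := CStarAlgebra.nonneg_iff_eq_star_mul_self.mp hN.nonneg
  have hB : B ≠ 0 := by rintro rfl; simp at hN0
  rw [star_eq_conjTranspose, ← Matrix.mul_assoc, trace_mul_cycle]
  exact (hZ.posSemidef.mul_mul_conjTranspose_same B).trace_nonneg.lt_of_ne'
    ((hZ.trace_mul_mul_conjTranspose_eq_zero_iff B).not.mpr hB)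

end Matrix

theorem stmt_5_general (d : ℕ) (ny : ℝ) (hny : 0 ≤ ny)
    (nZ : Matrix (Fin d) (Fin d) ℝ) (hnZ : nZ.PosSemidef)
    (hrank_pos : 0 < nZ.rank) :
    Klogdet d ∩ {q : E d | ip q (0, ny, nZ) = 0}
      = {p : E d | p.1 ≤ 0 ∧ p.2.1 = 0 ∧ p.2.2.PosSemidef ∧ (p.2.2 * nZ).trace = 0} := by
  have hnZ0 : nZ ≠ 0 := by rintro rfl; simp at hrank_pos
  ext ⟨x, y, Z⟩
  simp only [Set.mem_inter_iff, Set.mem_ofPred_eq, Klogdet, ip, mul_zero, zero_add]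
  constructor
  · rintro ⟨⟨hy, hZ, -⟩ | ⟨hx, rfl, hZ⟩, hip⟩
    · have := hZ.trace_mul_pos_of_posSemidef hnZ hnZ0
      nlinarith
    · exact ⟨hx, rfl, hZ, by simpa using hip⟩
  · rintro ⟨hx, rfl, hZ, htr⟩
    exact ⟨Or.inr ⟨hx, rfl, hZ⟩, by simp [htr]⟩

/-- Proposition 3.1(c): the face of `K_logdet` exposed by `n = (0, n_y, n_Z)` with `n_y ≥ 0`,
`n_Z ⪰ 0`, `0 < rank n_Z < d` is `F_s = ℝ₋ × {0} × (S₊ᵈ ∩ {n_Z}^⊥)`. -/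
theorem stmt_5 (d : ℕ) (hd : 2 ≤ d) (ny : ℝ) (hny : 0 ≤ ny)
    (nZ : Matrix (Fin d) (Fin d) ℝ) (hnZ : nZ.PosSemidef)
    (hrank_pos : 0 < nZ.rank) (hrank_lt : nZ.rank < d) :
    Klogdet d ∩ {q : E d | ip q (0, ny, nZ) = 0}
      = {p : E d | p.1 ≤ 0 ∧ p.2.1 = 0 ∧ p.2.2.PosSemidef ∧ (p.2.2 * nZ).trace = 0} :=
  stmt_5_general d ny hny nZ hnZ hrank_pos
end
end

section
/- Let d ≥ 2 be an integer and let F_d := {(x, 0, Z) ∈ E : x ≤ 0 and Z is positive semidefinite}. For integers k ≥ 2 define w^k := (d·log(k)/k, 0, I_d) ∈ E. Then dist(w^k, F_d) = d·log(k)/k, 0 < dist(w^k, K_logdet) ≤ 1/k, and liminf_{k→∞} dist(w^k, F_d)/g_d(dist(w^k, K_logdet)) ≥ d. (Hence the residual function g_d in the entropic error bound for F_d cannot be replaced by any function of strictly smaller order as t → 0⁺.) -/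
open Matrix Filter

noncomputable section

/-- The piecewise modified Boltzmann–Shannon entropy `g_d`. -/
def gd (t : ℝ) : ℝ :=
  if t = 0 then 0
  else if t ≤ Real.exp (-2) then -t * Real.log t
  else t + Real.exp (-2)

/-- The face `F_d = ℝ₋ × {0} × S₊ᵈ`. -/
def Fd (d : ℕ) : Set (E d) := {p | p.1 ≤ 0 ∧ p.2.1 = 0 ∧ p.2.2.PosSemidef}

/-- The sequence `w^k = (d log k / k, 0, I_d)`. -/
def wtight (d : ℕ) (k : ℕ) : E d := (d * Real.log k / k, 0, (1 : Matrix (Fin d) (Fin d) ℝ))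

/-! The distance to `F_d` is attained at `(0, 0, I_d)`, and `(d log k / k, 1/k, I_d) ∈ K_logdet`
lies at distance `1/k` from `w^k`. Conversely, a point `(x, y, Z)` of `K_logdet` within distance
`c ≤ e⁻¹` of `(a, 0, I_d)` has `y < c` and `Z i i < 1 + c`, so `log det Z ≤ tr Z - d ≤ d c` and
`x ≤ y log det (Z / y) ≤ -d c log c + d c²`, while `x > a - c`. Hence the distance is at least
any `c` with `c + d c² - d c log c ≤ a`; such `c > 0` exist by continuity, and `c = 1/(2k)` works
for large `k`. With `dist(w^k, K_logdet) ∈ [1/(2k), 1/k]`, where `g_d(t) = -t log t` is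
increasing, the ratio `dist(w^k, F_d) / g_d(dist(w^k, K_logdet))` lies in `[d, 2d]`. -/

open Real Topology

lemma Matrix.IsSymm.trace_mul_self {n : Type*} [Fintype n] {M : Matrix n n ℝ} (hM : M.IsSymm) :
    (M * M).trace = ∑ i, ∑ j, M i j ^ 2 := by
  simp only [trace, diag, mul_apply, hM.apply, sq]

lemma Matrix.IsSymm.sq_apply_le_trace_mul_self {n : Type*} [Fintype n] {M : Matrix n n ℝ}
    (hM : M.IsSymm) (i : n) : M i i ^ 2 ≤ (M * M).trace := by
  rw [hM.trace_mul_self]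
  calc M i i ^ 2 ≤ ∑ j, M i j ^ 2 :=
        Finset.single_le_sum (fun j _ => sq_nonneg (M i j)) (Finset.mem_univ i)
    _ ≤ ∑ i', ∑ j, M i' j ^ 2 :=
        Finset.single_le_sum (f := fun i' => ∑ j, M i' j ^ 2)
          (fun i' _ => Finset.sum_nonneg fun j _ => sq_nonneg _) (Finset.mem_univ i)

lemma Matrix.IsSymm.trace_mul_self_nonneg {n : Type*} [Fintype n] {M : Matrix n n ℝ}
    (hM : M.IsSymm) : 0 ≤ (M * M).trace := by
  rw [hM.trace_mul_self]; positivity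

lemma Matrix.PosDef.log_det_le_trace_sub_card {n : Type*} [Fintype n] [DecidableEq n]
    {Z : Matrix n n ℝ} (hZ : Z.PosDef) : log Z.det ≤ Z.trace - Fintype.card n := by
  have hH := hZ.isHermitian
  have hdet : Z.det = ∏ i, hH.eigenvalues i := by simp [hH.det_eq_prod_eigenvalues]
  have htr : Z.trace = ∑ i, hH.eigenvalues i := by simp [hH.trace_eq_sum_eigenvalues]
  rw [hdet, htr, log_prod fun i _ => (hZ.eigenvalues_pos i).ne']
  calc ∑ i, log (hH.eigenvalues i) ≤ ∑ i, (hH.eigenvalues i - 1) :=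
        Finset.sum_le_sum fun i _ => log_le_sub_one_of_pos (hZ.eigenvalues_pos i)
    _ = _ := by simp [Finset.sum_sub_distrib]

lemma Real.negMulLog_le_negMulLog {s t : ℝ} (hs : 0 ≤ s) (hst : s ≤ t) (ht : t ≤ exp (-1)) :
    negMulLog s ≤ negMulLog t := by
  have := mul_log_strictAntiOn.antitoneOn ⟨hs, hst.trans ht⟩ ⟨hs.trans hst, ht⟩ hst
  simp only [negMulLog_eq_neg]
  linarith

lemma Real.negMulLog_inv (x : ℝ) : negMulLog x⁻¹ = log x / x := by
  simp [negMulLog, log_inv, div_eq_inv_mul]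

lemma inv_eight_le_exp_neg_two : (8 : ℝ)⁻¹ ≤ exp (-2) := by
  have h : exp 2 < 8 := by
    rw [show (2 : ℝ) = 1 + 1 by norm_num, exp_add]
    nlinarith [exp_one_lt_d9, exp_pos 1]
  rw [exp_neg]
  exact inv_anti₀ (exp_pos 2) h.le

lemma gd_eq_negMulLog {t : ℝ} (ht0 : 0 ≤ t) (ht : t ≤ exp (-2)) : gd t = negMulLog t := by
  rcases ht0.eq_or_lt with rfl | ht0
  · simp [gd]
  · simp [gd, ht0.ne', ht, negMulLog]


section

variable {d k : ℕ}

lemma sdist_le_nrm_sub {p s : E d} {S : Set (E d)} (hs : s ∈ S) : sdist p S ≤ nrm (p - s) :=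
  csInf_le ⟨0, by rintro r ⟨s, _, rfl⟩; exact Real.sqrt_nonneg _⟩ ⟨s, hs, rfl⟩

lemma le_sdist {p : E d} {S : Set (E d)} {c : ℝ} (hS : S.Nonempty)
    (h : ∀ s ∈ S, c ≤ nrm (p - s)) : c ≤ sdist p S := by
  obtain ⟨s, hs⟩ := hS
  refine le_csInf ⟨_, s, hs, rfl⟩ ?_
  rintro r ⟨s, hs, rfl⟩
  exact h s hs

lemma abs_fst_le_nrm {p : E d} (hp : p.2.2.IsSymm) : |p.1| ≤ nrm p :=
  Real.abs_le_sqrt <| by nlinarith [hp.trace_mul_self_nonneg, sq_nonneg p.2.1]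

lemma abs_snd_le_nrm {p : E d} (hp : p.2.2.IsSymm) : |p.2.1| ≤ nrm p :=
  Real.abs_le_sqrt <| by nlinarith [hp.trace_mul_self_nonneg, sq_nonneg p.1]

lemma abs_apply_le_nrm {p : E d} (hp : p.2.2.IsSymm) (i : Fin d) : |p.2.2 i i| ≤ nrm p :=
  Real.abs_le_sqrt <| by nlinarith [hp.sq_apply_le_trace_mul_self i, sq_nonneg p.1, sq_nonneg p.2.1]

lemma Fd_subset_Klogdet : Fd d ⊆ Klogdet d := fun _ hp => Or.inr hp

lemma zero_mem_Fd : (0 : E d) ∈ Fd d := ⟨le_rfl, rfl, PosSemidef.zero⟩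

lemma isSymm_of_mem_Klogdet {p : E d} (hp : p ∈ Klogdet d) : p.2.2.IsSymm := by
  rcases hp with ⟨-, hZ, -⟩ | ⟨-, -, hZ⟩
  exacts [isHermitian_iff_isSymm.mp hZ.isHermitian, isHermitian_iff_isSymm.mp hZ.isHermitian]

lemma isSymm_one_sub_of_mem_Klogdet {p : E d} (hp : p ∈ Klogdet d) : (1 - p.2.2).IsSymm :=
  isSymm_one.sub (isSymm_of_mem_Klogdet hp)

lemma sdist_Fd_eq {a : ℝ} (ha : 0 ≤ a) : sdist ((a, 0, 1) : E d) (Fd d) = a := by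
  refine le_antisymm ?_ (le_sdist ⟨0, zero_mem_Fd⟩ fun s hs => ?_)
  · calc sdist ((a, 0, 1) : E d) (Fd d) ≤ nrm (((a, 0, 1) : E d) - (0, 0, 1)) :=
          sdist_le_nrm_sub ⟨le_rfl, rfl, PosSemidef.one⟩
      _ = a := by simp [nrm, Real.sqrt_sq ha]
  · have := abs_fst_le_nrm (p := ((a, 0, 1) : E d) - s)
      (isSymm_one_sub_of_mem_Klogdet (Fd_subset_Klogdet hs))
    simp only [Prod.fst_sub] at this
    linarith [hs.1, le_abs_self (a - s.1)]

lemma mul_log_det_inv_smul {y : ℝ} {Z : Matrix (Fin d) (Fin d) ℝ} (hy : 0 < y) (hZ : Z.PosDef) :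
    y * log (y⁻¹ • Z).det = d * negMulLog y + y * log Z.det := by
  rw [det_smul, log_mul (by positivity) hZ.det_pos.ne', log_pow, log_inv,
    Fintype.card_fin, negMulLog]
  ring

lemma fst_le_of_mem_Klogdet {p : E d} {c : ℝ} (hp : p ∈ Klogdet d) (hc : 0 ≤ c)
    (hce : c ≤ exp (-1)) (hy : p.2.1 ≤ c) (hZ : ∀ i, p.2.2 i i ≤ 1 + c) :
    p.1 ≤ d * c ^ 2 + d * negMulLog c := by
  rcases hp with ⟨hy0, hZpd, hx⟩ | ⟨hx, -, -⟩
  · have hlogdet : log p.2.2.det ≤ d * c :=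
      calc log p.2.2.det ≤ p.2.2.trace - d := by
            simpa using hZpd.log_det_le_trace_sub_card
        _ ≤ ∑ _i : Fin d, (1 + c) - d := by
            rw [trace]; gcongr with i; exact hZ i
        _ = d * c := by simp
    calc p.1 ≤ d * negMulLog p.2.1 + p.2.1 * log p.2.2.det :=
          hx.trans_eq (mul_log_det_inv_smul hy0 hZpd)
      _ ≤ d * negMulLog c + c * (d * c) := by
          refine add_le_add ?_ ?_
          · exact mul_le_mul_of_nonneg_left (negMulLog_le_negMulLog hy0.le hy hce) d.cast_nonneg
          · exact (mul_le_mul_of_nonneg_left hlogdet hy0.le).trans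
              (mul_le_mul_of_nonneg_right hy (by positivity))
      _ = d * c ^ 2 + d * negMulLog c := by ring
  · have := negMulLog_nonneg hc (hce.trans (by simp))
    linarith [mul_nonneg d.cast_nonneg (sq_nonneg c), mul_nonneg d.cast_nonneg this]

lemma le_sdist_Klogdet {a c : ℝ} (hc : 0 < c) (hce : c ≤ exp (-1))
    (h : c + d * c ^ 2 + d * negMulLog c ≤ a) : c ≤ sdist ((a, 0, 1) : E d) (Klogdet d) := by
  refine le_sdist ⟨0, Fd_subset_Klogdet zero_mem_Fd⟩ fun s hs => ?_
  by_contra! hlt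
  have hsymm : (((a, 0, 1) : E d) - s).2.2.IsSymm := isSymm_one_sub_of_mem_Klogdet hs
  have hx := abs_fst_le_nrm hsymm
  have hy := abs_snd_le_nrm hsymm
  have hZ := abs_apply_le_nrm hsymm
  simp only [Prod.fst_sub, Prod.snd_sub, Matrix.sub_apply, one_apply_eq, zero_sub, abs_neg]
    at hx hy hZ
  have := fst_le_of_mem_Klogdet hs hc.le hce (by linarith [le_abs_self s.2.1])
    (fun i => by linarith [neg_abs_le (1 - s.2.2 i i), hZ i])
  linarith [le_abs_self (a - s.1)]

lemma sdist_Klogdet_pos {a : ℝ} (ha : 0 < a) : 0 < sdist ((a, 0, 1) : E d) (Klogdet d) := by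
  have hf : Tendsto (fun c => c + d * c ^ 2 + d * negMulLog c) (𝓝[>] 0) (𝓝 0) := by
    have := ((by fun_prop : Continuous fun c : ℝ => c + d * c ^ 2 + d * negMulLog c).tendsto 0)
    simpa using this.mono_left nhdsWithin_le_nhds
  obtain ⟨c, hfc, hce, hc⟩ := ((hf.eventually (gt_mem_nhds ha)).and
    ((eventually_le_nhds (exp_pos (-1))).filter_mono nhdsWithin_le_nhds |>.and
      self_mem_nhdsWithin)).exists
  exact hc.trans_le (le_sdist_Klogdet hc hce hfc.le)

lemma sdist_wtight_Fd : sdist (wtight d k) (Fd d) = d * log k / k :=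
  sdist_Fd_eq (div_nonneg (mul_nonneg d.cast_nonneg (log_natCast_nonneg k)) k.cast_nonneg)

lemma sdist_wtight_Klogdet_le (hk : 0 < k) : sdist (wtight d k) (Klogdet d) ≤ 1 / k := by
  have hk' : (0 : ℝ) < k := by exact_mod_cast hk
  have hmem : ((d * log k / k, (k : ℝ)⁻¹, 1) : E d) ∈ Klogdet d := by
    refine Or.inl ⟨inv_pos.2 hk', PosDef.one, le_of_eq ?_⟩
    simp only [mul_log_det_inv_smul (inv_pos.2 hk') PosDef.one, negMulLog_inv, det_one,
      log_one, mul_zero, add_zero]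
    ring
  refine (sdist_le_nrm_sub hmem).trans_eq ?_
  simp [nrm, wtight, Real.sqrt_sq hk'.le]

lemma sdist_wtight_Klogdet_pos (hd : 0 < d) (hk : 2 ≤ k) : 0 < sdist (wtight d k) (Klogdet d) :=
  sdist_Klogdet_pos <| div_pos
    (mul_pos (Nat.cast_pos.2 hd) (log_pos (Nat.one_lt_cast.2 (by omega)))) (by positivity)

lemma inv_two_mul_le_sdist_wtight_Klogdet (hd : 1 ≤ d) (hk : 8 ≤ k) :
    (2 * k : ℝ)⁻¹ ≤ sdist (wtight d k) (Klogdet d) := by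
  have hk' : (8 : ℝ) ≤ k := by exact_mod_cast hk
  have hd' : (1 : ℝ) ≤ d := by exact_mod_cast hd
  set c : ℝ := (2 * k)⁻¹ with hc
  have hc0 : 0 < c := by positivity
  have hc16 : c ≤ 16⁻¹ := inv_anti₀ (by norm_num) (by linarith)
  have hce : c ≤ exp (-1) := calc
    c ≤ 8⁻¹ := hc16.trans (by norm_num)
    _ ≤ exp (-2) := inv_eight_le_exp_neg_two
    _ ≤ exp (-1) := exp_le_exp.2 (by norm_num)
  have hlogk : 3 * log 2 ≤ log k := calc
    3 * log 2 = log (2 ^ 3) := by rw [log_pow]; norm_num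
    _ ≤ log k := log_le_log (by norm_num) (by norm_num; linarith)
  have hneg : negMulLog c = (log 2 + log k) * c := by
    rw [hc, negMulLog_inv, log_mul two_ne_zero (by positivity), div_eq_mul_inv]
  have key : 1 + d * c + d * (log 2 + log k) ≤ 2 * d * log k := by
    have := log_two_lt_d9
    have := log_two_gt_d9
    nlinarith [mul_le_mul_of_nonneg_left hc16 (by positivity : (0 : ℝ) ≤ d),
      mul_le_mul_of_nonneg_left hlogk (by positivity : (0 : ℝ) ≤ d)]
  refine le_sdist_Klogdet hc0 hce ?_
  calc c + d * c ^ 2 + d * negMulLog c = c * (1 + d * c + d * (log 2 + log k)) := by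
        rw [hneg]; ring
    _ ≤ c * (2 * d * log k) := by gcongr
    _ = d * log k / k := by rw [hc]; field_simp

lemma gd_sdist_wtight_Klogdet_mem_Icc (hd : 1 ≤ d) (hk : 8 ≤ k) :
    gd (sdist (wtight d k) (Klogdet d)) ∈ Set.Icc (log k / (2 * k)) (log k / k) := by
  have hk' : (8 : ℝ) ≤ k := by exact_mod_cast hk
  have hlo := inv_two_mul_le_sdist_wtight_Klogdet hd hk
  have hhi : sdist (wtight d k) (Klogdet d) ≤ (k : ℝ)⁻¹ := by
    simpa using sdist_wtight_Klogdet_le (d := d) (by omega : 0 < k)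
  have hk8 : (k : ℝ)⁻¹ ≤ exp (-2) :=
    (inv_anti₀ (by norm_num) hk').trans inv_eight_le_exp_neg_two
  have hexp : exp (-2) ≤ exp (-1) := exp_le_exp.2 (by norm_num)
  have ht0 : 0 ≤ sdist (wtight d k) (Klogdet d) := (by positivity : (0 : ℝ) ≤ _).trans hlo
  rw [gd_eq_negMulLog ht0 (hhi.trans hk8)]
  constructor
  · calc log k / (2 * k) ≤ log (2 * k) / (2 * k) := by gcongr; linarith
      _ = negMulLog (2 * k)⁻¹ := (negMulLog_inv _).symm
      _ ≤ negMulLog _ :=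
          negMulLog_le_negMulLog (by positivity) hlo (hhi.trans (hk8.trans hexp))
  · calc negMulLog _ ≤ negMulLog (k : ℝ)⁻¹ :=
          negMulLog_le_negMulLog ht0 hhi (hk8.trans hexp)
      _ = log k / k := negMulLog_inv _

lemma sdist_wtight_Fd_div_gd_mem_Icc (hd : 1 ≤ d) (hk : 8 ≤ k) :
    sdist (wtight d k) (Fd d) / gd (sdist (wtight d k) (Klogdet d)) ∈
      Set.Icc (d : ℝ) (2 * d) := by
  obtain ⟨hlo, hhi⟩ := gd_sdist_wtight_Klogdet_mem_Icc hd hk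
  have hk' : (8 : ℝ) ≤ k := by exact_mod_cast hk
  have hlog : 0 < log k := log_pos (by linarith)
  have hpos : 0 < gd (sdist (wtight d k) (Klogdet d)) :=
    (by positivity : (0 : ℝ) < _).trans_le hlo
  rw [sdist_wtight_Fd, Set.mem_Icc, le_div_iff₀ hpos, div_le_iff₀ hpos]
  constructor
  · calc (d : ℝ) * gd _ ≤ d * (log k / k) := by gcongr
      _ = d * log k / k := by ring
  · calc (d : ℝ) * log k / k = 2 * d * (log k / (2 * k)) := by field_simp
      _ ≤ 2 * d * gd _ := by gcongr

end

/-- Remark 3.1 (tightness of the entropic error bound for `F_d`): along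
`w^k = (d log k / k, 0, I_d)` one has `dist(w^k, F_d) = d log k / k`,
`0 < dist(w^k, K_logdet) ≤ 1/k`, and
`liminf_k dist(w^k, F_d) / g_d(dist(w^k, K_logdet)) ≥ d`. -/
theorem stmt_10 (d : ℕ) (hd : 2 ≤ d) :
    (∀ k : ℕ, 2 ≤ k →
      sdist (wtight d k) (Fd d) = d * Real.log k / k ∧
      0 < sdist (wtight d k) (Klogdet d) ∧
      sdist (wtight d k) (Klogdet d) ≤ 1 / k) ∧
    (d : ℝ) ≤ liminf
      (fun k : ℕ => sdist (wtight d k) (Fd d) / gd (sdist (wtight d k) (Klogdet d))) atTop := by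
  refine ⟨fun k hk => ⟨sdist_wtight_Fd, sdist_wtight_Klogdet_pos (by omega) hk,
    sdist_wtight_Klogdet_le (by omega)⟩, ?_⟩
  have hbounds := (eventually_ge_atTop 8).mono fun k hk =>
    sdist_wtight_Fd_div_gd_mem_Icc (by omega : 1 ≤ d) hk
  -- the upper bound matters: `liminf` of a real sequence unbounded above is a junk value
  exact le_liminf_of_le
    (isBoundedUnder_of_eventually_le (hbounds.mono fun _ h => h.2)).isCoboundedUnder_ge
    (hbounds.mono fun _ h => h.1)
end
end

section
/- Let d ≥ 1 be an integer and η > 0. Let (x, y, Z) ∈ E satisfy y > 0, Z positive definite, x = y·log(det(Z/y)), ‖(x, y, Z)‖ ≤ η, and y·log(det(Z/y)) ≥ 0. Then 0 ≤ y·log(det(Z/y)) ≤ y·log(det(η·I_d/y)) ≤ d·y·|log η| − d·y·log y. -/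
open Matrix Filter

noncomputable section

/-! Every eigenvalue `λ` of `Z` satisfies `λ² ≤ tr (Z²) ≤ ‖(x, y, Z)‖² ≤ η²`, so for positive
definite `Z` the determinant, the product of the eigenvalues, is at most `ηᵈ = det (η I)`.
Since `A ↦ log det (A / y)` is monotone in `det A`, this gives the middle inequality; the last
one is the explicit value `y log det (η I / y) = d y log η - d y log y`. -/

namespace Matrix

variable {n : Type*} [Fintype n] [DecidableEq n]

theorem IsHermitian.trace_mul_self {𝕜 : Type*} [RCLike 𝕜] {A : Matrix n n 𝕜}
    (hA : A.IsHermitian) : (A * A).trace = ∑ i, ((hA.eigenvalues i ^ 2 : ℝ) : 𝕜) := by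
  conv_lhs => rw [hA.spectral_theorem, ← map_mul, Unitary.conjStarAlgAut_apply, trace_mul_cycle,
    Unitary.coe_star_mul_self, one_mul, diagonal_mul_diagonal, trace_diagonal]
  simp [sq]

theorem IsHermitian.eigenvalues_sq_le_trace_mul_self {A : Matrix n n ℝ} (hA : A.IsHermitian)
    (i : n) : hA.eigenvalues i ^ 2 ≤ (A * A).trace := by
  rw [hA.trace_mul_self]
  exact Finset.single_le_sum (f := fun j ↦ hA.eigenvalues j ^ 2) (fun j _ ↦ sq_nonneg _)
    (Finset.mem_univ i)

theorem PosSemidef.det_le_pow_of_trace_mul_self_le {A : Matrix n n ℝ} (hA : A.PosSemidef)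
    {η : ℝ} (hη : 0 ≤ η) (h : (A * A).trace ≤ η ^ 2) : A.det ≤ η ^ Fintype.card n := by
  have heig : ∀ i, hA.1.eigenvalues i ≤ η := fun i ↦
    (pow_le_pow_iff_left₀ (hA.eigenvalues_nonneg i) hη two_ne_zero).mp
      ((hA.1.eigenvalues_sq_le_trace_mul_self i).trans h)
  calc A.det = ∏ i, hA.1.eigenvalues i := by simpa using hA.1.det_eq_prod_eigenvalues
    _ ≤ ∏ _i : n, η := Finset.prod_le_prod (fun i _ ↦ hA.eigenvalues_nonneg i) fun i _ ↦ heig i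
    _ = η ^ Fintype.card n := by simp

theorem log_det_smul_le_log_det_smul {A B : Matrix n n ℝ} {c : ℝ} (hc : 0 < c)
    (hA : 0 < A.det) (hAB : A.det ≤ B.det) :
    Real.log (c • A).det ≤ Real.log (c • B).det := by
  rw [det_smul, det_smul]
  exact Real.log_le_log (by positivity) (by gcongr)

theorem mul_log_det_inv_smul_smul_one {y η : ℝ} (hy : 0 < y) (hη : 0 < η) :
    y * Real.log (y⁻¹ • η • (1 : Matrix n n ℝ)).det
      = Fintype.card n * y * Real.log η - Fintype.card n * y * Real.log y := by
  rw [smul_smul, det_smul, det_one, mul_one, Real.log_pow,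
    Real.log_mul (inv_pos.2 hy).ne' hη.ne', Real.log_inv]
  ring

end Matrix

theorem trace_mul_self_le_sq_of_nrm_le {d : ℕ} {p : E d} {η : ℝ} (h : nrm p ≤ η) :
    (p.2.2 * p.2.2).trace ≤ η ^ 2 := by
  have := Real.sqrt_le_iff.mp h
  nlinarith [sq_nonneg p.1, sq_nonneg p.2.1]

theorem stmt_19_general (d : ℕ) (η : ℝ) (hη : 0 < η)
    (x y : ℝ) (Z : Matrix (Fin d) (Fin d) ℝ)
    (hy : 0 < y) (hZ : Z.PosDef)
    (hnorm : nrm ((x, y, Z) : E d) ≤ η)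
    (hpos : 0 ≤ y * Real.log ((y⁻¹ • Z).det)) :
    0 ≤ y * Real.log ((y⁻¹ • Z).det) ∧
    y * Real.log ((y⁻¹ • Z).det)
      ≤ y * Real.log ((y⁻¹ • (η • (1 : Matrix (Fin d) (Fin d) ℝ))).det) ∧
    y * Real.log ((y⁻¹ • (η • (1 : Matrix (Fin d) (Fin d) ℝ))).det)
      ≤ d * y * |Real.log η| - d * y * Real.log y := by
  have hdet : Z.det ≤ (η • (1 : Matrix (Fin d) (Fin d) ℝ)).det := by
    simpa using hZ.posSemidef.det_le_pow_of_trace_mul_self_le hη.le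
      (trace_mul_self_le_sq_of_nrm_le hnorm)
  refine ⟨hpos, mul_le_mul_of_nonneg_left
    (log_det_smul_le_log_det_smul (inv_pos.2 hy) hZ.det_pos hdet) hy.le, ?_⟩
  rw [mul_log_det_inv_smul_smul_one hy hη, Fintype.card_fin]
  gcongr
  exact le_abs_self _

/-- Inequality (3.6): for `(x, y, Z)` on the boundary piece of `K_logdet` with `‖(x,y,Z)‖ ≤ η`
and `y log det(Z/y) ≥ 0`, one has
`0 ≤ y log det(Z/y) ≤ y log det(η I / y) ≤ d y |log η| - d y log y`. -/
theorem stmt_19 (d : ℕ) (hd : 1 ≤ d) (η : ℝ) (hη : 0 < η)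
    (x y : ℝ) (Z : Matrix (Fin d) (Fin d) ℝ)
    (hy : 0 < y) (hZ : Z.PosDef)
    (hx : x = y * Real.log ((y⁻¹ • Z).det))
    (hnorm : nrm ((x, y, Z) : E d) ≤ η)
    (hpos : 0 ≤ y * Real.log ((y⁻¹ • Z).det)) :
    0 ≤ y * Real.log ((y⁻¹ • Z).det) ∧
    y * Real.log ((y⁻¹ • Z).det)
      ≤ y * Real.log ((y⁻¹ • (η • (1 : Matrix (Fin d) (Fin d) ℝ))).det) ∧
    y * Real.log ((y⁻¹ • (η • (1 : Matrix (Fin d) (Fin d) ℝ))).det)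
      ≤ d * y * |Real.log η| - d * y * Real.log y :=
  stmt_19_general d η hη x y Z hy hZ hnorm hpos
end
end
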